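/- arXiv:2507.17724 — 14 statements merged into one kernel-verified Lean document; each statement's English description precedes it below -/
import Mathlib

section
/- There exists a quasi-implication algebra that is not a Boolean implication algebra; that is, there exists a (finite) type A with a binary operation · satisfying (Q1) (x·y)·x = x, (Q2) (x·y)·(x·z) = (y·x)·(y·z), and (Q3) ((x·y)·(y·x))·x = ((y·x)·(x·y))·y for all x, y, z, together with two elements a, b ∈ A such that (a·b)·b ≠ (b·a)·a. -/
def qop : Fin 5 → Fin 5 → Fin 5 :=
  fun x y => (![![0, 1, 2, 3, 4], ![0, 0, 2, 2, 2], ![0, 1, 0, 1, 1],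
               ![0, 4, 4, 0, 4], ![0, 3, 3, 3, 0]] : Fin 5 → Fin 5 → Fin 5) x y

/-- There exists a (finite) quasi-implication algebra that is not a Boolean
implication algebra: the quasi-commutativity equation fails. -/
theorem exists_quasiImplicationAlgebra_not_booleanImplicationAlgebra :
    ∃ (A : Type) (_ : Fintype A) (op : A → A → A),
      (∀ x y : A, op (op x y) x = x) ∧
      (∀ x y z : A, op (op x y) (op x z) = op (op y x) (op y z)) ∧
      (∀ x y : A, op (op (op x y) (op y x)) x = op (op (op y x) (op x y)) y) ∧
      ∃ a b : A, op (op a b) b ≠ op (op b a) a := by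
  refine ⟨Fin 5, inferInstance, qop, by decide, by decide, by decide, 1, 3, by decide⟩
end

section
/- Every quasi-implication algebra satisfies, for all x and y: (1) x·(x·y) = x·y; (2) x·x = (x·y)·(x·y); (3) x·x = y·y. -/
/-- Every quasi-implication algebra satisfies: (1) x·(x·y) = x·y;
(2) x·x = (x·y)·(x·y); (3) x·x = y·y. -/
theorem quasiImplicationAlgebra_basic_identities {A : Type*} (op : A → A → A)
    (Q1 : ∀ x y : A, op (op x y) x = x)
    (Q2 : ∀ x y z : A, op (op x y) (op x z) = op (op y x) (op y z))
    (Q3 : ∀ x y : A, op (op (op x y) (op y x)) x = op (op (op y x) (op x y)) y) :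
    (∀ x y : A, op x (op x y) = op x y) ∧
    (∀ x y : A, op x x = op (op x y) (op x y)) ∧
    (∀ x y : A, op x x = op y y) := by
  -- If a·x = x then x·a = a (from Q1).
  have L2 : ∀ a x : A, op a x = x → op x a = a := by
    intro a x h
    have h1 := Q1 a x
    rwa [h] at h1
  -- (1)
  have g1 : ∀ x y : A, op x (op x y) = op x y := by
    intro x y
    exact L2 _ _ (Q1 x y)
  -- squares are idempotent: (x·x)·(x·x) = x·x
  have hsq : ∀ x : A, op (op x x) (op x x) = op x x := by
    intro x
    have hEx : op (op x x) x = x := Q1 x x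
    have hxE : op x (op x x) = op x x := L2 _ _ hEx
    have h := Q2 (op x x) x x
    rw [hEx, hxE] at h
    exact h.symm
  -- (3)
  have g3 : ∀ x y : A, op x x = op y y := by
    intro x y
    set E := op x x with hE
    set F := op y y with hF
    have hEE : op E E = E := hsq x
    have hFF : op F F = F := hsq y
    set a := op E F with ha
    set b := op F E with hb
    have haE : op a E = E := Q1 E F
    have hEa : op E a = a := L2 _ _ haE
    have hbb : op b b = E := by
      have h := Q2 E F E
      rw [hEE] at h
      -- h : op a E = op b b
      rw [haE] at h
      exact h.symm
    have haa : op a a = F := by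
      have h := Q2 F E F
      rw [hFF] at h
      -- h : op b F = op a a
      rw [Q1 F E] at h
      exact h.symm
    have h3 := Q3 a E
    rw [haE, hEa, hEa, haE] at h3
    -- h3 : op (op E a) a = op (op a E) E  →  op a a = op E E
    rw [haa, hEE] at h3
    -- h3 : F = E (in some orientation)
    exact h3.symm
  exact ⟨g1, fun x y => g3 x (op x y), g3⟩
end

section
/- Every Boolean implication algebra is a quasi-implication algebra: if a binary operation · on a type A satisfies (x·y)·x = x, (x·y)·y = (y·x)·x, and x·(y·z) = y·(x·z) for all x, y, z, then it also satisfies (x·y)·(x·z) = (y·x)·(y·z) and ((x·y)·(y·x))·x = ((y·x)·(x·y))·y for all x, y, z. -/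
/-- Every Boolean implication algebra is a quasi-implication algebra. -/
theorem booleanImplicationAlgebra_isQuasiImplicationAlgebra {A : Type*} (op : A → A → A)
    (I1 : ∀ x y : A, op (op x y) x = x)
    (I2 : ∀ x y : A, op (op x y) y = op (op y x) x)
    (I3 : ∀ x y z : A, op x (op y z) = op y (op x z)) :
    (∀ x y z : A, op (op x y) (op x z) = op (op y x) (op y z)) ∧
    (∀ x y : A, op (op (op x y) (op y x)) x = op (op (op y x) (op x y)) y) := by
  -- x(xy) = xy
  have L1 : ∀ x y : A, op x (op x y) = op x y := by
    intro x y
    have h := I1 (op x y) x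
    rwa [I1 x y] at h
  -- (xy)(yx) = yx
  have LB : ∀ x y : A, op (op x y) (op y x) = op y x := by
    intro x y
    rw [I3 (op x y) y x, I1 x y]
  -- xx = (xy)(xy)
  have HA : ∀ x y : A, op x x = op (op x y) (op x y) := by
    intro x y
    have h := I2 (op x y) x
    rw [I1 x y, L1 x y] at h
    exact h
  -- xx = yy
  have L2 : ∀ x y : A, op x x = op y y := fun x y => calc op x x = op (op x y) (op x y) := HA x y
      _ = op (op (op x y) (op y x)) (op (op x y) (op y x)) := HA (op x y) (op y x)
      _ = op (op y x) (op y x) := by rw [LB x y]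
      _ = op y y := (HA y x).symm
  -- x(yy) = yy
  have L4 : ∀ x y : A, op x (op y y) = op y y := by
    intro x y
    rw [L2 y x]
    exact L1 x x
  -- x(yx) = xx
  have L5 : ∀ x y : A, op x (op y x) = op x x := by
    intro x y
    rw [I3 x y x, L4 y x]
  -- key lemma: ((xz)y)((xy)y) = (xy)(xy)
  have K : ∀ x y z : A,
      op (op (op x z) y) (op (op x y) y) = op (op x y) (op x y) := fun x y z => calc op (op (op x z) y) (op (op x y) y) = op (op x y) (op (op (op x z) y) y) := I3 (op (op x z) y) (op x y) y
      _ = op (op x y) (op (op y (op x z)) (op x z)) := congrArg (op (op x y)) (I2 (op x z) y)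
      _ = op (op x y) (op (op y (op x z)) (op x (op x z))) := congrArg (fun t => op (op x y) (op (op y (op x z)) t)) (L1 x z).symm
      _ = op (op x y) (op x (op (op y (op x z)) (op x z))) := congrArg (op (op x y)) (I3 (op y (op x z)) x (op x z))
      _ = op (op x y) (op x (op (op (op x z) y) y)) := congrArg (fun t => op (op x y) (op x t)) (I2 (op x z) y).symm
      _ = op (op x y) (op (op (op x z) y) (op x y)) := congrArg (op (op x y)) (I3 x (op (op x z) y) y)
      _ = op (op x y) (op x y) := L5 (op x y) (op (op x z) y)
  -- ((xy)(xz))(x(yz)) = yy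
  have P1 : ∀ x y z : A,
      op (op (op x y) (op x z)) (op x (op y z)) = op y y := fun x y z => calc op (op (op x y) (op x z)) (op x (op y z)) = op (op (op x y) (op x z)) (op y (op x z)) := congrArg (op (op (op x y) (op x z))) (I3 x y z)
      _ = op y (op (op (op x y) (op x z)) (op x z)) := I3 (op (op x y) (op x z)) y (op x z)
      _ = op y (op (op (op x z) (op x y)) (op x y)) := congrArg (op y) (I2 (op x y) (op x z))
      _ = op (op (op x z) (op x y)) (op y (op x y)) := I3 y (op (op x z) (op x y)) (op x y)
      _ = op (op (op x z) (op x y)) (op y y) := congrArg (op (op (op x z) (op x y))) (L5 y x)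
      _ = op y y := L4 (op (op x z) (op x y)) y
  -- (x(yz))((xy)(xz)) = (xy)(xy)
  have P2 : ∀ x y z : A,
      op (op x (op y z)) (op (op x y) (op x z)) = op (op x y) (op x y) := fun x y z => calc op (op x (op y z)) (op (op x y) (op x z)) = op (op x y) (op (op x (op y z)) (op x z)) := I3 (op x (op y z)) (op x y) (op x z)
      _ = op (op x y) (op (op y (op x z)) (op x z)) := congrArg (fun t => op (op x y) (op t (op x z))) (I3 x y z)
      _ = op (op x y) (op (op (op x z) y) y) := congrArg (op (op x y)) (I2 (op x z) y).symm
      _ = op (op (op x z) y) (op (op x y) y) := I3 (op x y) (op (op x z) y) y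
      _ = op (op x y) (op x y) := K x y z
  -- self-distributivity: x(yz) = (xy)(xz)
  have SD : ∀ x y z : A, op x (op y z) = op (op x y) (op x z) := by
    intro x y z
    have h1 : op (op (op x y) (op x z)) (op x (op y z))
        = op (op x (op y z)) (op x (op y z)) := (P1 x y z).trans (L2 y (op x (op y z)))
    have h2 : op (op x (op y z)) (op (op x y) (op x z))
        = op (op (op x y) (op x z)) (op (op x y) (op x z)) := (P2 x y z).trans (L2 (op x y) (op (op x y) (op x z)))
    calc op x (op y z) = op (op (op x (op y z)) (op x (op y z))) (op x (op y z)) := (I1 _ _).symm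
      _ = op (op (op (op x y) (op x z)) (op x (op y z))) (op x (op y z)) := by rw [h1]
      _ = op (op (op x (op y z)) (op (op x y) (op x z))) (op (op x y) (op x z)) := I2 (op (op x y) (op x z)) (op x (op y z))
      _ = op (op (op (op x y) (op x z)) (op (op x y) (op x z))) (op (op x y) (op x z)) := by
          rw [h2]
      _ = op (op x y) (op x z) := I1 _ _
  constructor
  · intro x y z
    calc op (op x y) (op x z) = op x (op y z) := (SD x y z).symm
      _ = op y (op x z) := I3 x y z
      _ = op (op y x) (op y z) := SD y x z
  · intro x y
    calc op (op (op x y) (op y x)) x = op (op y x) x := by rw [LB x y]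
      _ = op (op x y) y := I2 y x
      _ = op (op (op y x) (op x y)) y := by rw [LB y x]
end

section
/- If A is an orthomodular lattice, then the Sasaki implication p_s(x,y) := x^⊥ ∨ (x ∧ y) makes A a bounded quasi-implication algebra: for all x, y, z one has (Q1) p_s(p_s(x,y),x) = x, (Q2) p_s(p_s(x,y),p_s(x,z)) = p_s(p_s(y,x),p_s(y,z)), (Q3) p_s(p_s(p_s(x,y),p_s(y,x)),x) = p_s(p_s(p_s(y,x),p_s(x,y)),y), and p_s(0,x) = 1. -/
/-- If `A` is an orthomodular lattice, then the Sasaki implication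
`p_s(x,y) := xᗮ ⊔ (x ⊓ y)` makes `A` a bounded quasi-implication algebra:
it satisfies (Q1), (Q2), (Q3) and `p_s(0,x) = 1`. -/
theorem orthomodular_sasaki_boundedQuasiImplicationAlgebra
    {A : Type*} [Lattice A] [BoundedOrder A] (compl : A → A)
    (h_inf : ∀ x : A, x ⊓ compl x = ⊥)
    (h_sup : ∀ x : A, x ⊔ compl x = ⊤)
    (h_anti : ∀ x y : A, x ≤ y → compl y ≤ compl x)
    (h_inv : ∀ x : A, compl (compl x) = x)
    (h_om : ∀ x y : A, x ≤ y → y = x ⊔ (compl x ⊓ y))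
    (ps : A → A → A)
    (hps : ∀ x y : A, ps x y = compl x ⊔ (x ⊓ y)) :
    (∀ x y : A, ps (ps x y) x = x) ∧
    (∀ x y z : A, ps (ps x y) (ps x z) = ps (ps y x) (ps y z)) ∧
    (∀ x y : A, ps (ps (ps x y) (ps y x)) x = ps (ps (ps y x) (ps x y)) y) ∧
    (∀ x : A, ps ⊥ x = ⊤) := by
  -- De Morgan laws
  have dm_sup : ∀ a b : A, compl (a ⊔ b) = compl a ⊓ compl b := by
    intro a b
    apply le_antisymm
    · exact le_inf (h_anti a (a ⊔ b) le_sup_left) (h_anti b (a ⊔ b) le_sup_right)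
    · have h1 : a ⊔ b ≤ compl (compl a ⊓ compl b) := by
        apply sup_le
        · have := h_anti (compl a ⊓ compl b) (compl a) inf_le_left
          rwa [h_inv] at this
        · have := h_anti (compl a ⊓ compl b) (compl b) inf_le_right
          rwa [h_inv] at this
      have := h_anti _ _ h1
      rwa [h_inv] at this
  have dm_inf : ∀ a b : A, compl (a ⊓ b) = compl a ⊔ compl b := by
    intro a b
    conv_lhs => rw [← h_inv a, ← h_inv b, ← dm_sup]
    exact h_inv _
  -- key lemma: if n ≤ p then p ⊓ (pᗮ ⊔ n) = n  (dual orthomodular law)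
  have L1 : ∀ n p : A, n ≤ p → p ⊓ (compl p ⊔ n) = n := by
    intro n p h
    have hn : n ≤ p ⊓ (compl p ⊔ n) := le_inf h le_sup_right
    have hz : compl n ⊓ (p ⊓ (compl p ⊔ n)) = ⊥ := by
      apply le_antisymm _ bot_le
      have h2 : compl n ⊓ (p ⊓ (compl p ⊔ n)) ≤ (compl p ⊔ n) ⊓ compl (compl p ⊔ n) := by
        rw [dm_sup, h_inv]
        exact le_inf (le_trans inf_le_right inf_le_right)
          (le_inf (le_trans inf_le_right inf_le_left) inf_le_left)
      rw [h_inf] at h2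
      exact h2
    have := h_om n (p ⊓ (compl p ⊔ n)) hn
    rw [hz, sup_bot_eq] at this
    exact this
  -- complement of a Sasaki implication
  have cps : ∀ x y : A, compl (ps x y) = x ⊓ (compl x ⊔ compl y) := by
    intro x y
    rw [hps, dm_sup, h_inv, dm_inf]
  refine ⟨?_, ?_, ?_, ?_⟩
  · -- Q1
    intro x y
    have hca : compl (ps x y) ≤ x := by
      have h1 : compl x ≤ ps x y := by rw [hps]; exact le_sup_left
      have := h_anti _ _ h1
      rwa [h_inv] at this
    have := h_om _ x hca
    rw [h_inv] at this
    rw [hps]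
    exact this.symm
  · -- Q2
    have q2h : ∀ x y z : A,
        ps (ps x y) (ps x z) = (compl x ⊔ compl y) ⊔ (x ⊓ y ⊓ z) := by
      intro x y z
      have e1 : x ⊓ ps x y = x ⊓ y := by
        rw [hps]; exact L1 (x ⊓ y) x inf_le_left
      have e2 : x ⊓ ps x z = x ⊓ z := by
        rw [hps]; exact L1 (x ⊓ z) x inf_le_left
      have hmeet : ps x y ⊓ ps x z = compl x ⊔ (x ⊓ y ⊓ z) := by
        apply le_antisymm
        · have hx' : compl x ≤ ps x y ⊓ ps x z := by
            rw [hps, hps]; exact le_inf le_sup_left le_sup_left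
          have hom := h_om _ _ hx'
          rw [h_inv] at hom
          conv_lhs => rw [hom]
          apply sup_le le_sup_left
          have h1 : x ⊓ (ps x y ⊓ ps x z) ≤ x ⊓ y ⊓ z := by
            apply le_inf
            · apply le_inf
              · calc x ⊓ (ps x y ⊓ ps x z) ≤ x ⊓ ps x y :=
                  inf_le_inf_left x inf_le_left
                _ = x ⊓ y := e1
                _ ≤ x := inf_le_left
              · calc x ⊓ (ps x y ⊓ ps x z) ≤ x ⊓ ps x y :=
                  inf_le_inf_left x inf_le_left
                _ = x ⊓ y := e1
                _ ≤ y := inf_le_right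
            · calc x ⊓ (ps x y ⊓ ps x z) ≤ x ⊓ ps x z :=
                inf_le_inf_left x inf_le_right
              _ = x ⊓ z := e2
              _ ≤ z := inf_le_right
          exact le_trans h1 le_sup_right
        · apply sup_le
          · rw [hps, hps]; exact le_inf le_sup_left le_sup_left
          · apply le_inf
            · rw [hps]
              exact le_trans (le_inf (le_trans inf_le_left inf_le_left)
                (le_trans inf_le_left inf_le_right)) le_sup_right
            · rw [hps]
              exact le_trans (le_inf (le_trans inf_le_left inf_le_left)
                inf_le_right) le_sup_right
      have key : compl x ⊔ (x ⊓ (compl x ⊔ compl y)) = compl x ⊔ compl y := by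
        have := h_om (compl x) (compl x ⊔ compl y) le_sup_left
        rw [h_inv] at this
        exact this.symm
      rw [hps (ps x y), cps, hmeet, ← sup_assoc,
        sup_comm (x ⊓ (compl x ⊔ compl y)) (compl x), key]
    intro x y z
    rw [q2h, q2h, sup_comm (compl x) (compl y), inf_comm x y]
  · -- Q3
    have q3h : ∀ x y : A, ps (ps (ps x y) (ps y x)) x = x ⊔ y := by
      intro x y
      have hab : ps x y ⊓ ps y x = (compl x ⊓ compl y) ⊔ (x ⊓ y) := by
        apply le_antisymm
        · have hm : x ⊓ y ≤ ps x y ⊓ ps y x := by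
            rw [hps, hps]
            exact le_inf le_sup_right (le_trans (le_of_eq (inf_comm x y)) le_sup_right)
          have hom := h_om _ _ hm
          have e1 : compl (x ⊓ y) ⊓ ps x y = compl x := by
            have h1 := L1 (compl x) (compl (x ⊓ y)) (h_anti _ _ inf_le_left)
            rw [h_inv] at h1
            rw [hps, sup_comm (compl x) (x ⊓ y)]
            exact h1
          have e2 : compl (x ⊓ y) ⊓ ps y x = compl y := by
            have h1 := L1 (compl y) (compl (x ⊓ y)) (h_anti _ _ inf_le_right)
            rw [h_inv] at h1
            rw [hps, inf_comm y x, sup_comm (compl y) (x ⊓ y)]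
            exact h1
          conv_lhs => rw [hom]
          rw [sup_comm]
          apply sup_le _ le_sup_right
          apply le_trans _ le_sup_left
          apply le_inf
          · calc compl (x ⊓ y) ⊓ (ps x y ⊓ ps y x)
                ≤ compl (x ⊓ y) ⊓ ps x y := inf_le_inf_left _ inf_le_left
              _ = compl x := e1
          · calc compl (x ⊓ y) ⊓ (ps x y ⊓ ps y x)
                ≤ compl (x ⊓ y) ⊓ ps y x := inf_le_inf_left _ inf_le_right
              _ = compl y := e2
        · apply sup_le
          · rw [hps, hps]
            exact le_inf (le_trans inf_le_left le_sup_left)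
              (le_trans inf_le_right le_sup_left)
          · rw [hps, hps]
            exact le_inf le_sup_right (le_trans (le_of_eq (inf_comm x y)) le_sup_right)
      have ht : ps (ps x y) (ps y x) = x ⊔ (compl x ⊓ compl y) := by
        have hx : (x ⊓ (compl x ⊔ compl y)) ⊔ (x ⊓ y) = x := by
          have := h_om (x ⊓ y) x inf_le_left
          rw [dm_inf] at this
          rw [sup_comm, inf_comm x (compl x ⊔ compl y)]
          exact this.symm
        rw [hps (ps x y), cps, hab, ← sup_assoc, sup_assoc (x ⊓ (compl x ⊔ compl y)),
          sup_comm (compl x ⊓ compl y) (x ⊓ y), ← sup_assoc, hx]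
      rw [ht]
      have hxt : x ≤ x ⊔ (compl x ⊓ compl y) := le_sup_left
      have hct : compl (x ⊔ (compl x ⊓ compl y)) = compl x ⊓ (x ⊔ y) := by
        rw [dm_sup, dm_inf, h_inv, h_inv]
      rw [hps, hct, inf_eq_right.mpr hxt, sup_comm]
      have := h_om x (x ⊔ y) le_sup_left
      exact this.symm
    intro x y
    rw [q3h, q3h, sup_comm]
  · -- p_s(0,x) = 1
    have hb : compl (⊥ : A) = ⊤ := by
      have := h_sup (⊥ : A)
      rwa [bot_sup_eq] at this
    intro x
    rw [hps, hb, top_sup_eq]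
end

section
/- In any quasi-implication algebra, the relation defined by x ≼ y iff x·y = 1 is a partial order (reflexive, antisymmetric, and transitive), and 1 is its greatest element. -/
/-- In any quasi-implication algebra, the relation `x ≼ y iff x·y = 1` is a
partial order (reflexive, antisymmetric, transitive), and `1` is its greatest
element. -/
theorem quasiImplicationAlgebra_partialOrder {A : Type*} (op : A → A → A)
    (one : A)
    (Q1 : ∀ x y : A, op (op x y) x = x)
    (Q2 : ∀ x y z : A, op (op x y) (op x z) = op (op y x) (op y z))
    (Q3 : ∀ x y : A, op (op (op x y) (op y x)) x = op (op (op y x) (op x y)) y)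
    (hone : ∀ x : A, op x x = one) :
    (∀ x : A, op x x = one) ∧
    (∀ x y : A, op x y = one → op y x = one → x = y) ∧
    (∀ x y z : A, op x y = one → op y z = one → op x z = one) ∧
    (∀ x : A, op x one = one) := by
  have hone1 : ∀ x : A, op one x = x := fun x => by
    have := Q1 x x; rwa [hone x] at this
  have htop0 : ∀ x y : A, op (op y x) one = one := fun x y => by
    have h := Q2 x y y
    rw [hone (op x y), hone y] at h; exact h.symm
  have htop : ∀ x : A, op x one = one := fun x => by
    have h := htop0 x one
    rwa [hone1] at h
  refine ⟨hone, ?_, ?_, htop⟩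
  · intro x y hxy hyx
    have h := Q3 x y
    rw [hxy, hyx, hone one, hone1 x, hone1 y] at h
    exact h
  · intro x y z hxy hyz
    have h := Q2 x y z
    rw [hxy, hone1, hyz, htop] at h
    exact h
end

section
/- If A is a bounded quasi-implication algebra, then setting x* := x·0, x ⊕ y := ((x·y)·(y·x))·x, and x ⊙ y := (x* ⊕ y*)*, the structure (A, ⊙, ⊕, *, 0, 1) is an orthomodular lattice: ⊕ and ⊙ give the least upper bound and greatest lower bound with respect to the order x ≼ y iff x·y = 1, the element 0 is least and 1 is greatest, * is an orthocomplementation (x ⊙ x* = 0, x ⊕ x* = 1, x ≼ y implies y* ≼ x*, x** = x), and x ≼ y implies y = x ⊕ (x* ⊙ y). -/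
/-- If `A` is a bounded quasi-implication algebra, then with `x* := x·0`,
`x ⊕ y := ((x·y)·(y·x))·x` and `x ⊙ y := (x* ⊕ y*)*`, the structure
`(A, ⊙, ⊕, *, 0, 1)` is an orthomodular lattice with respect to the order
`x ≼ y iff x·y = 1`. -/
theorem boundedQuasiImplicationAlgebra_orthomodularLattice {A : Type*}
    (op : A → A → A) (one zero : A)
    (Q1 : ∀ x y : A, op (op x y) x = x)
    (Q2 : ∀ x y z : A, op (op x y) (op x z) = op (op y x) (op y z))
    (Q3 : ∀ x y : A, op (op (op x y) (op y x)) x = op (op (op y x) (op x y)) y)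
    (hone : ∀ x : A, op x x = one)
    (hzero : ∀ x : A, op zero x = one)
    (star : A → A) (hstar : ∀ x : A, star x = op x zero)
    (oplus : A → A → A) (hoplus : ∀ x y : A, oplus x y = op (op (op x y) (op y x)) x)
    (odot : A → A → A) (hodot : ∀ x y : A, odot x y = star (oplus (star x) (star y))) :
    -- ⊕ is the least upper bound
    (∀ x y : A, op x (oplus x y) = one ∧ op y (oplus x y) = one ∧
      ∀ z : A, op x z = one → op y z = one → op (oplus x y) z = one) ∧
    -- ⊙ is the greatest lower bound
    (∀ x y : A, op (odot x y) x = one ∧ op (odot x y) y = one ∧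
      ∀ z : A, op z x = one → op z y = one → op z (odot x y) = one) ∧
    -- 0 is least and 1 is greatest
    (∀ x : A, op zero x = one) ∧ (∀ x : A, op x one = one) ∧
    -- * is an orthocomplementation
    (∀ x : A, odot x (star x) = zero) ∧
    (∀ x : A, oplus x (star x) = one) ∧
    (∀ x y : A, op x y = one → op (star y) (star x) = one) ∧
    (∀ x : A, star (star x) = x) ∧
    -- orthomodular law
    (∀ x y : A, op x y = one → y = oplus x (odot (star x) y)) := by
  have Lone : ∀ x : A, op one x = x := fun x => by rw [← hone x]; exact Q1 x x
  have L21 : ∀ x y : A, op (op x y) one = one := fun x y => by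
    have h := Q2 y x x
    rw [hone, hone] at h
    exact h.symm
  have Ltop : ∀ x : A, op x one = one := fun x => by
    have h := L21 (op x zero) x
    rwa [Q1 x zero] at h
  have Labs : ∀ x y : A, op x (op x y) = op x y := fun x y => by
    have h := Q1 (op x y) x
    rwa [Q1 x y] at h
  have D4 : ∀ x y : A, op x (op (op x y) (op y x)) = one := fun x y => by
    calc op x (op (op x y) (op y x))
        = op (op (op x y) x) (op (op x y) (op y x)) := congrFun (congrArg op (Q1 x y).symm) _
      _ = op (op x (op x y)) (op x (op y x)) := Q2 (op x y) x (op y x)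
      _ = op (op x y) (op x (op y x)) := by rw [Labs]
      _ = op (op y x) (op y (op y x)) := Q2 x y (op y x)
      _ = op (op y x) (op y x) := by rw [Labs]
      _ = one := hone _
  have Lkey : ∀ x u : A, op x u = one → ∀ z : A, op x z = op (op u x) (op u z) :=
    fun x u h z => by
      have h2 := Q2 x u z
      rwa [h, Lone] at h2
  have Lmix : ∀ x u : A, op x u = one → op x (op u x) = one := fun x u h => by
    rw [Lkey x u h (op u x), Labs, hone]
  have C6 : ∀ x z : A, op (op x zero) (op x z) = one := fun x z => by
    have h := Q2 x zero z
    rwa [hzero, hzero, hone] at h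
  have Jab : ∀ x y : A, op x y = one → op (op y x) x = y := fun x y h => by
    have h3 := Q3 x y
    rw [h, Lone, L21, Lone] at h3
    exact h3
  have F1 : ∀ x y : A, op x y = one → op x zero = op (op y x) (op y zero) :=
    fun x y h => Lkey x y h zero
  have Ldneg0 : ∀ x : A, op (op x zero) zero = x := fun a =>
    (Eq.trans (Eq.trans (Eq.trans (Eq.trans (Eq.trans (Eq.trans (Eq.trans (Eq.trans (Eq.trans (congrFun (congrArg op (Q1 (op a zero) (op a zero)).symm) zero) (congrFun (congrArg op (congrFun (congrArg op (hone (op a zero))) (op a zero))) zero)) (congrFun (congrArg op (congrFun (congrArg op (hzero a).symm) (op a zero))) zero)) (Q3 zero a)) (congrFun (congrArg op (congrArg (op (op a zero)) (hzero a))) a)) (congrFun (congrArg op (congrFun (congrArg op (Q1 (op a zero) (op a zero)).symm) one)) a)) (congrFun (congrArg op (congrFun (congrArg op (congrFun (congrArg op (hone (op a zero))) (op a zero))) one)) a)) (congrFun (congrArg op (Q1 one (op a zero))) a)) (congrFun (congrArg op (hone a).symm) a)) (Q1 a a))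
  have Lcontra0 : ∀ x y : A, op x y = one → op (op y zero) (op x zero) = one :=
    fun x y h => by
      rw [F1 x y h]
      exact Lmix (op y zero) (op y x) (C6 y x)
  have CG : ∀ x w z : A, op x w = one → op w (op x z) = op x z := fun x w z h => by
    have e := Lkey x (op w x) (Lmix x w h) z
    rw [Jab x w h] at e
    rw [e, Labs]
  have N3 : ∀ x y : A, op x y = one → op x (op y zero) = op x zero := fun x y h => by
    rw [Lkey x y h (op y zero), Labs, ← F1 x y h]
  have N4 : ∀ x y : A, op x y = one → op (op y zero) x = y := fun x y h => by
    have hc := Lcontra0 x y h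
    have hf := F1 (op y zero) (op x zero) hc
    rw [Ldneg0 y, Ldneg0 x] at hf
    have hk := Lkey (op y zero) (op x zero) hc x
    rw [Q1 x zero] at hk
    rw [hk, ← hf]
  have Gm2 : ∀ x y : A, op x y = one → op (op x zero) (op y zero) = op y x :=
    fun x y h => by
      rw [F1 x y h]
      exact Jab (op y zero) (op y x) (C6 y x)
  have Gm1 : ∀ x y : A, op x y = one → op (op x zero) (op y x) = op y x :=
    fun x y h => by rw [← Gm2 x y h, Labs]
  have N6 : ∀ x y : A, op x y = one → op (op x zero) y = y := fun x y h => by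
    have n7 : op (op y x) (op y zero) = op x zero := by
      have j := Jab (op y zero) (op x zero) (Lcontra0 x y h)
      rwa [Gm2 x y h] at j
    calc op (op x zero) y
        = op (op (op y x) (op y zero)) y := by rw [n7]
      _ = op (op (op y x) (op y zero)) (op (op y x) y) := congrArg _ (Q1 y x).symm
      _ = op (op (op y zero) (op y x)) (op (op y zero) y) := Q2 (op y x) (op y zero) y
      _ = op one (op (op y zero) y) := by rw [C6 y x]
      _ = op (op y zero) y := Lone _
      _ = y := Q1 y zero
  have Lub1 : ∀ x y : A, op x (oplus x y) = one := fun x y => by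
    rw [hoplus]; exact Lmix x _ (D4 x y)
  have Lub2 : ∀ x y : A, op y (oplus x y) = one := fun x y => by
    rw [hoplus, Q3]; exact Lmix y _ (D4 y x)
  have Llub : ∀ x y z : A, op x z = one → op y z = one → op (oplus x y) z = one :=
    fun x y z h1 h2 => by
      rw [hoplus]
      have hW : op (op (op (op z x) (op z y)) (op (op z y) (op z x))) z = z := by
        have hcg := CG (op z x) (op (op (op z x) (op z y)) (op (op z y) (op z x))) z
          (D4 (op z x) (op z y))
        rwa [Q1 z x] at hcg
      have hN2 : op (op (op x y) (op y x)) z = z := by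
        rw [Lkey x z h1 y, Lkey y z h2 x]; exact hW
      calc op (op (op (op x y) (op y x)) x) z
          = op (op (op (op x y) (op y x)) x) (op (op (op x y) (op y x)) z) :=
            congrArg _ hN2.symm
        _ = op (op x (op (op x y) (op y x))) (op x z) := Q2 (op (op x y) (op y x)) x z
        _ = one := by rw [D4 x y, Lone, h1]
  have LdnegS : ∀ x : A, star (star x) = x := fun x => by rw [hstar, hstar, Ldneg0]
  have LcontraS : ∀ x y : A, op x y = one → op (star y) (star x) = one := fun x y h => by
    rw [hstar, hstar]; exact Lcontra0 x y h
  have Ljtop : ∀ x : A, oplus x (star x) = one := fun x => by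
    rw [hoplus, hstar, Labs, Q1, Q1, hone]
  have OdotStar : ∀ x : A, odot x (star x) = zero := fun x => by
    rw [hodot, Ljtop (star x), hstar, Lone]
  have Oglb1 : ∀ x y : A, op (odot x y) x = one := fun x y => by
    rw [hodot]
    have h := LcontraS (star x) (oplus (star x) (star y)) (Lub1 (star x) (star y))
    rwa [LdnegS] at h
  have Oglb2 : ∀ x y : A, op (odot x y) y = one := fun x y => by
    rw [hodot]
    have h := LcontraS (star y) (oplus (star x) (star y)) (Lub2 (star x) (star y))
    rwa [LdnegS] at h
  have Oglb3 : ∀ x y z : A, op z x = one → op z y = one → op z (odot x y) = one :=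
    fun x y z h1 h2 => by
      rw [hodot]
      have hl : op (oplus (star x) (star y)) (star z) = one :=
        Llub (star x) (star y) (star z) (LcontraS z x h1) (LcontraS z y h2)
      have h := LcontraS (oplus (star x) (star y)) (star z) hl
      rwa [LdnegS] at h
  have LOM : ∀ x y : A, op x y = one → y = oplus x (odot (star x) y) := fun x y h => by
    rw [hodot, LdnegS]
    rw [hstar y]
    have hd : oplus x (op y zero) = op y x := by
      rw [hoplus, N3 x y h, N4 x y h, N6 x y h]
    rw [hd, hstar (op y x)]
    rw [hoplus]
    have hax : op x (op y x) = one := Lmix x y h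
    rw [N3 x (op y x) hax, N4 x (op y x) hax]
    rw [Gm1 x y h]
    exact (Jab x y h).symm
  exact ⟨fun x y => ⟨Lub1 x y, Lub2 x y, Llub x y⟩,
         fun x y => ⟨Oglb1 x y, Oglb2 x y, Oglb3 x y⟩,
         hzero, Ltop, OdotStar, Ljtop, LcontraS, LdnegS, LOM⟩
end

section
/- If A is a bounded quasi-implication algebra, then the relation on A \ {0} defined by x ⊥ y iff x·(y·0) = 1 is irreflexive and symmetric; that is, the MacLaren frame of A is an orthoframe. -/
/-- The MacLaren frame of a bounded quasi-implication algebra is an orthoframe: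
the relation `x ⊥ y iff x·(y·0) = 1` on `A \ {0}` is irreflexive and symmetric. -/
theorem maclarenFrame_isOrthoframe {A : Type*}
    (op : A → A → A) (one zero : A)
    (Q1 : ∀ x y : A, op (op x y) x = x)
    (Q2 : ∀ x y z : A, op (op x y) (op x z) = op (op y x) (op y z))
    (Q3 : ∀ x y : A, op (op (op x y) (op y x)) x = op (op (op y x) (op x y)) y)
    (hone : ∀ x : A, op x x = one)
    (hzero : ∀ x : A, op zero x = one) :
    -- irreflexive
    (∀ x : A, x ≠ zero → ¬ (op x (op x zero) = one)) ∧
    -- symmetric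
    (∀ x y : A, x ≠ zero → y ≠ zero → op x (op y zero) = one → op y (op x zero) = one) := by
  -- 1·x = x
  have F1 : ∀ x : A, op one x = x := by
    intro x
    have h := Q1 x x
    rw [hone] at h
    exact h
  -- x·1 = 1
  have F2 : ∀ x : A, op x one = one := by
    intro x
    have h1 : op (op one x) one = one := by
      have h := Q2 one x one
      rw [hone, hone] at h
      exact h
    rw [F1] at h1
    exact h1
  -- double negation: (x·0)·0 = x
  have L1 : ∀ x : A, op (op x zero) zero = x := by
    intro x
    have h := Q3 x zero
    rw [hzero, F2, F1, F1] at h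
    exact h.symm
  -- if a·b = 1 then a·z = (b·a)·(b·z)
  have F4 : ∀ a b : A, op a b = one → ∀ z : A, op a z = op (op b a) (op b z) := by
    intro a b h z
    have h2 := Q2 a b z
    rw [h, F1] at h2
    exact h2
  -- (y·0)·(y·z) = 1
  have F6 : ∀ y z : A, op (op y zero) (op y z) = one := by
    intro y z
    have h := F4 zero y (hzero y) z
    rw [hzero] at h
    exact h.symm
  -- if a·b = 1 then (b·a)·a = b
  have Pstar : ∀ a b : A, op a b = one → op (op b a) a = b := by
    intro a b h
    have h3 := Q3 a b
    rw [h, F1, F2, F1] at h3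
    exact h3
  -- if u·v = 1 then u·(v·u) = 1
  have L3 : ∀ u v : A, op u v = one → op u (op v u) = one := by
    intro u v h
    have hd : op (op v u) u = v := Pstar u v h
    have hvd : op v (op v u) = op v u := by
      have h5 := Q1 (op v u) u
      rw [hd] at h5
      exact h5
    have h4 := F4 u v h (op v u)
    rw [hvd, hone] at h4
    exact h4
  constructor
  · -- irreflexive
    intro x hx h
    -- from Q3 with y := x·0, deduce x·0 = 1
    have hb : op (op x zero) x = x := Q1 x zero
    have h3 := Q3 x (op x zero)
    rw [hb, Q1, hone, h, F2, F1] at h3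
    -- h3 : one = op x zero
    have : x = zero := by
      have := L1 x
      rw [← h3, F1] at this
      exact this.symm
    exact hx this
  · -- symmetric
    intro x y hx hy h
    set b := op y zero with hbdef
    have hx0 : op x zero = op (op b x) y := by
      have h6 := F4 x b h zero
      rw [show op b zero = y from L1 y] at h6
      exact h6
    have hyc : op y (op b x) = one := by
      have h7 := F6 b x
      rw [show op b zero = y from L1 y] at h7
      exact h7
    have h8 := L3 y (op b x) hyc
    rw [← hx0] at h8
    exact h8
end

section
/- If A is a bounded quasi-implication algebra, then the relation on the set of proper filters of A defined by α ⊥ β iff there exists x ∈ A with x ∈ α and x·0 ∈ β is irreflexive and symmetric; that is, the Goldblatt frame of A is an orthoframe. -/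
/-- The Goldblatt frame of a bounded quasi-implication algebra is an orthoframe:
the relation `α ⊥ β iff ∃ x, x ∈ α ∧ x·0 ∈ β` on the proper filters of `A` is
irreflexive and symmetric. -/
theorem goldblattFrame_isOrthoframe {A : Type*}
    (op : A → A → A) (one zero : A)
    (Q1 : ∀ x y : A, op (op x y) x = x)
    (Q2 : ∀ x y z : A, op (op x y) (op x z) = op (op y x) (op y z))
    (Q3 : ∀ x y : A, op (op (op x y) (op y x)) x = op (op (op y x) (op x y)) y)
    (hone : ∀ x : A, op x x = one)
    (hzero : ∀ x : A, op zero x = one)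
    (IsProperFilter : Set A → Prop)
    (hFilter : ∀ α : Set A, IsProperFilter α ↔
      α.Nonempty ∧
      (∀ x ∈ α, ∀ y : A, op x y = one → y ∈ α) ∧
      (∀ x ∈ α, ∀ y ∈ α, op (op (op x y) (op x zero)) zero ∈ α) ∧
      zero ∉ α) :
    -- irreflexive
    (∀ α : Set A, IsProperFilter α → ¬ ∃ x : A, x ∈ α ∧ op x zero ∈ α) ∧
    -- symmetric
    (∀ α β : Set A, IsProperFilter α → IsProperFilter β →
      (∃ x : A, x ∈ α ∧ op x zero ∈ β) → (∃ x : A, x ∈ β ∧ op x zero ∈ α)) := by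
  -- `1·y = y`
  have h1 : ∀ y : A, op one y = y := fun y => by rw [← hone y, Q1]
  -- `(x·y)·1 = 1`
  have key : ∀ x y : A, op (op x y) one = one := by
    intro x y
    have h := Q2 x y x
    simp only [hone] at h
    exact h
  -- `u·1 = 1`
  have hT3 : ∀ u : A, op u one = one := by
    intro u
    have h := key (op u u) u
    rwa [Q1] at h
  -- double negation: `(x·0)·0 = x`
  have dneg : ∀ x : A, op (op x zero) zero = x := by
    intro x
    have h := Q3 x zero
    simp only [hzero, hT3, h1] at h
    exact h.symm
  constructor
  · rintro α hα ⟨x, hx, hx'⟩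
    obtain ⟨-, -, hii, h0⟩ := (hFilter α).mp hα
    have h := hii (op x zero) hx' x hx
    rw [Q1, dneg, hone, h1] at h
    exact h0 h
  · rintro α β hα hβ ⟨x, hxα, hx'β⟩
    exact ⟨op x zero, hx'β, by rw [dneg]; exact hxα⟩
end

section
/- If A is a monadic quasi-implication algebra, then the operation ◇ is idempotent: ◇◇x = ◇x for all x ∈ A. -/
/-- In a monadic quasi-implication algebra, the operation `◇` is idempotent:
`◇◇x = ◇x` for all `x`. -/
theorem monadicQuasiImplicationAlgebra_diamond_idempotent {A : Type*}
    (op : A → A → A) (one zero : A) (d : A → A)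
    (Q1 : ∀ x y : A, op (op x y) x = x)
    (Q2 : ∀ x y z : A, op (op x y) (op x z) = op (op y x) (op y z))
    (Q3 : ∀ x y : A, op (op (op x y) (op y x)) x = op (op (op y x) (op x y)) y)
    (hone : ∀ x : A, op x x = one)
    (hzero : ∀ x : A, op zero x = one)
    (ha1 : ∀ x : A, op (d (d x)) (d x) = one)
    (ha2 : ∀ x : A, op x (d x) = one)
    (hb1 : ∀ x : A, d (op (d x) zero) = op (d x) zero)
    (hb2 : d zero = zero)
    (hc : ∀ x y : A, d (op (op (op x zero) (op y zero)) x)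
        = op (op (op (d x) zero) (op (d y) zero)) (d x)) :
    ∀ x : A, d (d x) = d x := by
  have hid : ∀ x : A, op one x = x := fun x => by rw [← hone x]; exact Q1 x x
  intro x
  have h3 := Q3 (d (d x)) (d x)
  rw [ha1 x, ha2 (d x), hone one, hid, hid] at h3
  exact h3
end

section
/- If A is a quantum monadic algebra, then (A, p_s, 0, ∃) is a monadic quasi-implication algebra: with x·y := p_s(x,y) = x^⊥ ∨ (x ∧ y), the operation · satisfies (Q1)–(Q3), 0·x = 1 for all x, and the quantifier ∃ satisfies (a) ∃∃x·∃x = 1 and x·∃x = 1; (b) ∃(∃x·0) = ∃x·0 and ∃0 = 0; (c) ∃(((x·0)·(y·0))·x) = ((∃x·0)·(∃y·0))·∃x, for all x, y. -/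
/-- If `A` is a quantum monadic algebra, then `(A, p_s, 0, ∃)` is a monadic
quasi-implication algebra, where `x·y := p_s(x,y) = xᗮ ⊔ (x ⊓ y)`. -/
theorem quantumMonadicAlgebra_toMonadicQuasiImplicationAlgebra
    {A : Type*} [Lattice A] [BoundedOrder A] (compl : A → A) (e : A → A)
    (h_inf : ∀ x : A, x ⊓ compl x = ⊥)
    (h_sup : ∀ x : A, x ⊔ compl x = ⊤)
    (h_anti : ∀ x y : A, x ≤ y → compl y ≤ compl x)
    (h_inv : ∀ x : A, compl (compl x) = x)
    (h_om : ∀ x y : A, x ≤ y → y = x ⊔ (compl x ⊓ y))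
    (he0 : e ⊥ = ⊥)
    (he_le : ∀ x : A, x ≤ e x)
    (he_sup : ∀ x y : A, e (x ⊔ y) = e x ⊔ e y)
    (he_idem : ∀ x : A, e (e x) = e x)
    (he_compl : ∀ x : A, e (compl (e x)) = compl (e x))
    (ps : A → A → A)
    (hps : ∀ x y : A, ps x y = compl x ⊔ (x ⊓ y)) :
    -- (Q1)-(Q3)
    (∀ x y : A, ps (ps x y) x = x) ∧
    (∀ x y z : A, ps (ps x y) (ps x z) = ps (ps y x) (ps y z)) ∧
    (∀ x y : A, ps (ps (ps x y) (ps y x)) x = ps (ps (ps y x) (ps x y)) y) ∧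
    -- boundedness: 0·x = 1
    (∀ x : A, ps ⊥ x = ⊤) ∧
    -- (a)
    (∀ x : A, ps (e (e x)) (e x) = ⊤) ∧
    (∀ x : A, ps x (e x) = ⊤) ∧
    -- (b)
    (∀ x : A, e (ps (e x) ⊥) = ps (e x) ⊥) ∧
    e ⊥ = ⊥ ∧
    -- (c)
    (∀ x y : A, e (ps (ps (ps x ⊥) (ps y ⊥)) x)
      = ps (ps (ps (e x) ⊥) (ps (e y) ⊥)) (e x)) := by
  -- de Morgan laws
  have dm_sup : ∀ x y : A, compl (x ⊔ y) = compl x ⊓ compl y := by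
    intro x y
    apply le_antisymm
    · exact le_inf (h_anti _ _ le_sup_left) (h_anti _ _ le_sup_right)
    · have hx : x ≤ compl (compl x ⊓ compl y) := by
        calc x = compl (compl x) := (h_inv x).symm
        _ ≤ _ := h_anti _ _ inf_le_left
      have hy : y ≤ compl (compl x ⊓ compl y) := by
        calc y = compl (compl y) := (h_inv y).symm
        _ ≤ _ := h_anti _ _ inf_le_right
      have h := h_anti _ _ (sup_le hx hy)
      rwa [h_inv] at h
  have dm_inf : ∀ x y : A, compl (x ⊓ y) = compl x ⊔ compl y := by
    intro x y
    have h := dm_sup (compl x) (compl y)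
    rw [h_inv, h_inv] at h
    rw [← h, h_inv]
  have cbot : compl (⊥ : A) = ⊤ := by
    have := h_sup (⊥ : A); rwa [bot_sup_eq] at this
  -- absorption: p ≤ x → x ⊓ (compl x ⊔ p) = p
  have absorb : ∀ x p : A, p ≤ x → x ⊓ (compl x ⊔ p) = p := by
    intro x p hpx
    have h2 := h_om _ _ (h_anti _ _ hpx)
    have h3 := congrArg compl h2
    rw [h_inv p, h_inv x, dm_sup, h_inv x, dm_inf, h_inv p] at h3
    exact h3.symm
  -- Foulis–Holland special case
  have fh : ∀ x p q : A, p ≤ x → q ≤ x →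
      (compl x ⊔ p) ⊓ (compl x ⊔ q) = compl x ⊔ (p ⊓ q) := by
    intro x p q hp hq
    apply le_antisymm
    · have hcm : compl x ≤ (compl x ⊔ p) ⊓ (compl x ⊔ q) :=
        le_inf le_sup_left le_sup_left
      have hom := h_om _ _ hcm
      rw [h_inv] at hom
      have h1 : x ⊓ ((compl x ⊔ p) ⊓ (compl x ⊔ q)) ≤ p := by
        have h := inf_le_inf_left x
          (inf_le_left : (compl x ⊔ p) ⊓ (compl x ⊔ q) ≤ compl x ⊔ p)
        rwa [absorb x p hp] at h
      have h2 : x ⊓ ((compl x ⊔ p) ⊓ (compl x ⊔ q)) ≤ q := by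
        have h := inf_le_inf_left x
          (inf_le_right : (compl x ⊔ p) ⊓ (compl x ⊔ q) ≤ compl x ⊔ q)
        rwa [absorb x q hq] at h
      calc (compl x ⊔ p) ⊓ (compl x ⊔ q)
          = compl x ⊔ (x ⊓ ((compl x ⊔ p) ⊓ (compl x ⊔ q))) := hom
        _ ≤ compl x ⊔ (p ⊓ q) := sup_le_sup_left (le_inf h1 h2) _
    · exact le_inf (sup_le_sup_left inf_le_left _) (sup_le_sup_left inf_le_right _)
  -- orthomodular identity in sup form: p ≤ x → p ⊔ (compl p ⊓ x) = x
  -- (h_om directly). Also: compl x ⊔ (x ⊓ compl (x ⊓ y)) = compl (x ⊓ y)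
  have om1 : ∀ x y : A, compl x ⊔ (x ⊓ compl (x ⊓ y)) = compl (x ⊓ y) := by
    intro x y
    have h := h_om (compl x) (compl (x ⊓ y)) (h_anti _ _ inf_le_left)
    rw [h_inv] at h
    exact h.symm
  -- key lemma: ps (ps x y) (ps x z) = compl (x ⊓ y) ⊔ (x ⊓ y ⊓ z)
  have keyL : ∀ x y z : A, ps (ps x y) (ps x z) = compl (x ⊓ y) ⊔ (x ⊓ y ⊓ z) := by
    intro x y z
    rw [hps, hps, hps]
    rw [fh x (x ⊓ y) (x ⊓ z) inf_le_left inf_le_left]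
    rw [dm_sup, h_inv, dm_inf]
    have hmeet : (x ⊓ y) ⊓ (x ⊓ z) = x ⊓ y ⊓ z := by
      rw [inf_assoc x y, inf_left_comm y x z, ← inf_assoc x x, inf_idem, ← inf_assoc]
    rw [hmeet]
    rw [← dm_inf]
    rw [sup_left_comm, ← sup_assoc, om1]
  -- Q1
  have q1 : ∀ x y : A, ps (ps x y) x = x := by
    intro x y
    rw [hps, hps]
    have ha : compl (compl x ⊔ x ⊓ y) ≤ x := by
      have h := h_anti _ _ (le_sup_left : compl x ≤ compl x ⊔ x ⊓ y)
      rwa [h_inv] at h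
    have hom := h_om _ _ ha
    rw [h_inv] at hom
    exact hom.symm
  -- ps x ⊥ = compl x
  have psbot : ∀ x : A, ps x ⊥ = compl x := by
    intro x; rw [hps, inf_bot_eq, sup_bot_eq]
  -- lemma M: ps (ps x y) (ps y x) = x ⊔ compl (x ⊔ y)
  have lemM : ∀ x y : A, ps (ps x y) (ps y x) = x ⊔ compl (x ⊔ y) := by
    intro x y
    rw [hps, hps, hps]
    have hcomm : compl y ⊔ y ⊓ x = compl y ⊔ x ⊓ y := by rw [inf_comm]
    rw [hcomm]
    have hfh : (compl x ⊔ x ⊓ y) ⊓ (compl y ⊔ x ⊓ y)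
        = (x ⊓ y) ⊔ (compl x ⊓ compl y) := by
      have h := fh (compl (x ⊓ y)) (compl x) (compl y)
        (h_anti _ _ inf_le_left) (h_anti _ _ inf_le_right)
      rw [h_inv] at h
      rw [sup_comm (compl x) (x ⊓ y), sup_comm (compl y) (x ⊓ y)]
      exact h
    rw [hfh]
    rw [dm_sup, h_inv]
    -- x ⊓ compl (x ⊓ y) ⊔ ((x ⊓ y) ⊔ (compl x ⊓ compl y))
    rw [← sup_assoc]
    have hx : (x ⊓ compl (x ⊓ y)) ⊔ (x ⊓ y) = x := by
      have h := h_om (x ⊓ y) x inf_le_left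
      rw [sup_comm, inf_comm] at h
      exact h.symm
    rw [hx, ← dm_sup]
  -- lemma N: ps (x ⊔ compl (x ⊔ y)) x = x ⊔ y
  have lemN : ∀ x y : A, ps (x ⊔ compl (x ⊔ y)) x = x ⊔ y := by
    intro x y
    rw [hps]
    have hdc : compl (x ⊔ compl (x ⊔ y)) = compl x ⊓ (x ⊔ y) := by
      rw [dm_sup, h_inv]
    have hdx : (x ⊔ compl (x ⊔ y)) ⊓ x = x := inf_eq_right.mpr le_sup_left
    rw [hdc, hdx]
    have h := h_om x (x ⊔ y) le_sup_left
    rw [sup_comm]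
    exact h.symm
  refine ⟨q1, ?_, ?_, ?_, ?_, ?_, ?_, he0, ?_⟩
  · -- Q2
    intro x y z
    rw [keyL, keyL, inf_comm y x]
  · -- Q3
    intro x y
    rw [lemM, lemM, lemN, lemN, sup_comm]
  · -- 0 · x = 1
    intro x
    rw [hps, cbot, bot_inf_eq, top_sup_eq]
  · -- ∃∃x · ∃x = 1
    intro x
    rw [he_idem, hps, inf_idem, sup_comm, h_sup]
  · -- x · ∃x = 1
    intro x
    rw [hps, inf_eq_left.mpr (he_le x), sup_comm, h_sup]
  · -- ∃(∃x · 0) = ∃x · 0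
    intro x
    rw [psbot, he_compl]
  · -- (c)
    intro x y
    have key : ∀ u v : A, ps (ps (ps u ⊥) (ps v ⊥)) u = u ⊔ v := by
      intro u v
      rw [psbot, psbot, hps (compl u) (compl v), h_inv, ← dm_sup]
      exact lemN u v
    rw [key, key, he_sup]
end

section
/- In any orthomodular lattice, the operations derived from the Sasaki implication recover the original structure: for all x, y one has p_s(x, 0) = x^⊥, p_s(p_s(p_s(x,y), p_s(x,0)), 0) = x ∧ y, and p_s(p_s(p_s(x,0), p_s(y,0)), x) = x ∨ y. -/
/-- In any orthomodular lattice, the operations derived from the Sasaki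
implication recover the original structure: `p_s(x,0) = xᗮ`,
`p_s(p_s(p_s(x,y), p_s(x,0)), 0) = x ⊓ y`, and
`p_s(p_s(p_s(x,0), p_s(y,0)), x) = x ⊔ y`. -/
theorem orthomodular_sasaki_recovers_structure {A : Type*} [Lattice A]
    [BoundedOrder A] (compl : A → A)
    (h_inf : ∀ x : A, x ⊓ compl x = ⊥)
    (h_sup : ∀ x : A, x ⊔ compl x = ⊤)
    (h_anti : ∀ x y : A, x ≤ y → compl y ≤ compl x)
    (h_inv : ∀ x : A, compl (compl x) = x)
    (h_om : ∀ x y : A, x ≤ y → y = x ⊔ (compl x ⊓ y))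
    (ps : A → A → A)
    (hps : ∀ x y : A, ps x y = compl x ⊔ (x ⊓ y)) :
    (∀ x : A, ps x ⊥ = compl x) ∧
    (∀ x y : A, ps (ps (ps x y) (ps x ⊥)) ⊥ = x ⊓ y) ∧
    (∀ x y : A, ps (ps (ps x ⊥) (ps y ⊥)) x = x ⊔ y) := by
  have dm : ∀ u v : A, compl (u ⊔ v) = compl u ⊓ compl v := by
    intro u v
    apply le_antisymm
    · exact le_inf (h_anti _ _ le_sup_left) (h_anti _ _ le_sup_right)
    · have h1 : u ⊔ v ≤ compl (compl u ⊓ compl v) := by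
        apply sup_le
        · have := h_anti _ _ (inf_le_left (a := compl u) (b := compl v))
          rwa [h_inv] at this
        · have := h_anti _ _ (inf_le_right (a := compl u) (b := compl v))
          rwa [h_inv] at this
      have h2 := h_anti _ _ h1
      rwa [h_inv] at h2
  have sas : ∀ x y : A, x ⊓ (compl x ⊔ (x ⊓ y)) = x ⊓ y := by
    intro x y
    apply le_antisymm
    · set c := x ⊓ y with hc
      set d := x ⊓ (compl x ⊔ c) with hd
      have hcd : c ≤ d := le_inf inf_le_left le_sup_right
      have hbot : compl c ⊓ d ≤ ⊥ := by
        have h1 : compl c ⊓ d ≤ compl (compl x ⊔ c) := by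
          rw [dm, h_inv]
          exact le_inf (le_trans inf_le_right inf_le_left) inf_le_left
        have h2 : compl c ⊓ d ≤ compl x ⊔ c := le_trans inf_le_right inf_le_right
        calc compl c ⊓ d ≤ (compl x ⊔ c) ⊓ compl (compl x ⊔ c) := le_inf h2 h1
          _ = ⊥ := h_inf _
      calc d = c ⊔ (compl c ⊓ d) := h_om c d hcd
        _ ≤ c ⊔ ⊥ := sup_le_sup_left (le_trans hbot bot_le) c
        _ = c := sup_bot_eq c
    · exact le_inf inf_le_left le_sup_right
  have p1 : ∀ x : A, ps x ⊥ = compl x := by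
    intro x; rw [hps]; simp
  refine ⟨p1, ?_, ?_⟩
  · intro x y
    rw [p1, p1]
    rw [hps x y]
    have hxa : compl x ≤ compl x ⊔ (x ⊓ y) := le_sup_left
    rw [hps]
    have hinf : (compl x ⊔ x ⊓ y) ⊓ compl x = compl x :=
      inf_eq_right.mpr hxa
    rw [hinf, dm, h_inv, h_inv, inf_comm, sas]
  · intro x y
    rw [p1, p1]
    rw [hps (compl x) (compl y), h_inv]
    have hxe : x ≤ x ⊔ (compl x ⊓ compl y) := le_sup_left
    rw [hps]
    have hinf : (x ⊔ compl x ⊓ compl y) ⊓ x = x := inf_eq_right.mpr hxe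
    rw [hinf, dm]
    have hxy : compl (compl x ⊓ compl y) = x ⊔ y := by
      rw [← dm x y, h_inv]
    rw [hxy, sup_comm]
    exact (h_om x (x ⊔ y) le_sup_left).symm
end

section
/- In any monadic quasi-implication algebra, ◇ is monotone with respect to the induced order: if x·y = 1 then ◇x·◇y = 1. -/
/-- In a monadic quasi-implication algebra, `◇` is monotone with respect to the
induced order: if `x·y = 1` then `◇x·◇y = 1`. -/
theorem monadicQuasiImplicationAlgebra_diamond_monotone {A : Type*}
    (op : A → A → A) (one zero : A) (d : A → A)
    (Q1 : ∀ x y : A, op (op x y) x = x)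
    (Q2 : ∀ x y z : A, op (op x y) (op x z) = op (op y x) (op y z))
    (Q3 : ∀ x y : A, op (op (op x y) (op y x)) x = op (op (op y x) (op x y)) y)
    (hone : ∀ x : A, op x x = one)
    (hzero : ∀ x : A, op zero x = one)
    (ha1 : ∀ x : A, op (d (d x)) (d x) = one)
    (ha2 : ∀ x : A, op x (d x) = one)
    (hb1 : ∀ x : A, d (op (d x) zero) = op (d x) zero)
    (hb2 : d zero = zero)
    (hc : ∀ x y : A, d (op (op (op x zero) (op y zero)) x)
        = op (op (op (d x) zero) (op (d y) zero)) (d x)) :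
    ∀ x y : A, op x y = one → op (d x) (d y) = one := by
  have h1l : ∀ x : A, op one x = x := fun x => by
    have h := Q1 x x; rwa [hone] at h
  have r1' : ∀ x y : A, op (op y x) one = one := fun x y => by
    have h := Q2 x y y
    rw [hone (op x y), hone y] at h
    exact h.symm
  have r1 : ∀ x : A, op x one = one := fun x => by
    have h := r1' x one
    rwa [h1l] at h
  have T4 : ∀ a b : A, op a (op a b) = op a b := fun a b => by
    have h := Q1 (op a b) a
    rwa [Q1 a b] at h
  have dag : ∀ x y : A, op x y = one → op (op y x) x = y := by
    intro x y hxy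
    have h := Q3 x y
    rw [hxy, h1l, r1, h1l] at h
    exact h
  have zz : ∀ x z : A, op (op x zero) (op x z) = one := fun x z => by
    have h := Q2 x zero z
    rwa [hzero, hzero, hone] at h
  have N : ∀ u t : A, op u (op (op u zero) t) = one := fun u t => by
    have h := Q2 (op u zero) u t
    rwa [Q1 u zero, T4, zz] at h
  have T5w : ∀ a b : A, op a b = one → op a (op b a) = one := by
    intro a b hab
    have h := Q2 a b (op b a)
    rwa [hab, h1l, T4, hone] at h
  intro x y hxy
  have s4 : op x zero = op (op y x) (op y zero) := by
    have h := Q2 x y zero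
    rwa [hxy, h1l] at h
  have s3 : op (op (op y x) (op y zero)) (op y zero) = op y x :=
    dag (op y zero) (op y x) (zz y x)
  have L4 : op (op (op x zero) (op y zero)) x = y := by
    rw [s4, s3]; exact dag x y hxy
  have hy := hc x y
  rw [L4] at hy
  have P := T5w (d x) (op (op (d x) zero) (op (d y) zero)) (N (d x) (op (d y) zero))
  rwa [← hy] at P
end

section
/- Let A be a monadic quasi-implication algebra, and on the set A \ {0} define x ⊥ y iff x·(y·0) = 1 and x R y iff y·◇x = 1. Then for every x ∈ A \ {0}, the orthocomplement of the R-image of {x} is characterized by: R[{x}]^⊥ = {y ∈ A \ {0} : y·(◇x·0) = 1}, where R[{x}] = {y ∈ A \ {0} : x R y} and U^⊥ = {y ∈ A \ {0} : y ⊥ u for all u ∈ U}. -/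
/-- In the monadic MacLaren frame of a monadic quasi-implication algebra, for
every `x ∈ A \ {0}`: `R[{x}]^⊥ = {y ∈ A \ {0} : y·(◇x·0) = 1}`, where
`x ⊥ y iff x·(y·0) = 1`, `x R y iff y·◇x = 1`, `R[{x}] = {y ∈ A \ {0} : x R y}`
and `U^⊥ = {y ∈ A \ {0} : y ⊥ u for all u ∈ U}`. -/
theorem monadicMaclarenFrame_perp_of_image {A : Type*}
    (op : A → A → A) (one zero : A) (d : A → A)
    (Q1 : ∀ x y : A, op (op x y) x = x)
    (Q2 : ∀ x y z : A, op (op x y) (op x z) = op (op y x) (op y z))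
    (Q3 : ∀ x y : A, op (op (op x y) (op y x)) x = op (op (op y x) (op x y)) y)
    (hone : ∀ x : A, op x x = one)
    (hzero : ∀ x : A, op zero x = one)
    (ha1 : ∀ x : A, op (d (d x)) (d x) = one)
    (ha2 : ∀ x : A, op x (d x) = one)
    (hb1 : ∀ x : A, d (op (d x) zero) = op (d x) zero)
    (hb2 : d zero = zero)
    (hc : ∀ x y : A, d (op (op (op x zero) (op y zero)) x)
        = op (op (op (d x) zero) (op (d y) zero)) (d x)) :
    ∀ x : A, x ≠ zero →
      {y : A | y ≠ zero ∧
          ∀ u : A, u ≠ zero ∧ op u (d x) = one → op y (op u zero) = one}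
        = {y : A | y ≠ zero ∧ op y (op (d x) zero) = one} := by
  -- 1·z = z
  have l1 : ∀ z : A, op one z = z := by
    intro z
    have h := Q1 z z
    rwa [hone] at h
  -- z·1 = 1
  have l2 : ∀ z : A, op z one = one := by
    intro z
    have h := Q2 one z one
    rw [l1, l1, hone] at h
    exact h
  -- antisymmetry
  have antisym : ∀ u v : A, op u v = one → op v u = one → u = v := by
    intro u v h1 h2
    have h := Q3 u v
    rw [h1, h2, l1, l1, l1] at h
    exact h
  -- transitivity
  have htrans : ∀ u v w : A, op u v = one → op v w = one → op u w = one := by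
    intro u v w h1 h2
    have h := Q2 u v w
    rw [h1, h2, l1, l2] at h
    exact h
  -- T : u ≤ v → (v·u)·u = v
  have hT : ∀ u v : A, op u v = one → op (op v u) u = v := by
    intro u v h
    have h3 := Q3 u v
    rw [h, l1, l2, l1] at h3
    exact h3
  -- A : u ≤ w → u ≤ w·u
  have lemA : ∀ u w : A, op u w = one → op u (op w u) = one := by
    intro u w h
    have hd : op (op w u) u = w := hT u w h
    have hwd : op w (op w u) = op w u := by
      have h5 := Q1 (op w u) u
      rwa [hd] at h5
    have h2 := Q2 u w (op w u)
    rw [h, l1, hwd, hone] at h2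
    exact h2
  -- contraposition : u ≤ v → v·0 ≤ u·0
  have contrap : ∀ u v : A, op u v = one →
      op (op v zero) (op u zero) = one := by
    intro u v h
    have h1 : op u zero = op (op v u) (op v zero) := by
      have h2 := Q2 u v zero
      rwa [h, l1] at h2
    have h3 : op (op v zero) (op v u) = one := by
      have h4 := Q2 v zero u
      rwa [hzero, hzero, l1] at h4
    rw [h1]
    exact lemA (op v zero) (op v u) h3
  intro x hx
  have hdx0 : d x ≠ zero := by
    intro h
    apply hx
    apply antisym x zero _ (hzero x)
    have h2 := ha2 x
    rwa [h] at h2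
  ext y
  simp only [Set.mem_setOf_eq]
  constructor
  · rintro ⟨hy, h⟩
    exact ⟨hy, h (d x) ⟨hdx0, hone (d x)⟩⟩
  · rintro ⟨hy, hyd⟩
    exact ⟨hy, fun u hu =>
      htrans y (op (d x) zero) (op u zero) hyd (contrap u (d x) hu.2)⟩
end

section
/- Let A be a monadic quasi-implication algebra, and on the set A \ {0} define x ⊥ y iff x·(y·0) = 1 and x R y iff y·◇x = 1. Then for every x ∈ A \ {0} and every z ∈ R[R[{x}]^⊥], one has z·◇(◇x·0) = 1, where R[U] = {y ∈ A \ {0} : u R y for some u ∈ U} and U^⊥ = {y ∈ A \ {0} : y ⊥ u for all u ∈ U}. -/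
/-- In the monadic MacLaren frame of a monadic quasi-implication algebra, for
every `x ∈ A \ {0}` and every `z ∈ R[R[{x}]^⊥]`, one has `z·◇(◇x·0) = 1`, where
`x ⊥ y iff x·(y·0) = 1`, `x R y iff y·◇x = 1`,
`R[U] = {y ∈ A \ {0} : u R y for some u ∈ U}` and
`U^⊥ = {y ∈ A \ {0} : y ⊥ u for all u ∈ U}`. -/
theorem monadicMaclarenFrame_image_of_perp {A : Type*}
    (op : A → A → A) (one zero : A) (d : A → A)
    (Q1 : ∀ x y : A, op (op x y) x = x)
    (Q2 : ∀ x y z : A, op (op x y) (op x z) = op (op y x) (op y z))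
    (Q3 : ∀ x y : A, op (op (op x y) (op y x)) x = op (op (op y x) (op x y)) y)
    (hone : ∀ x : A, op x x = one)
    (hzero : ∀ x : A, op zero x = one)
    (ha1 : ∀ x : A, op (d (d x)) (d x) = one)
    (ha2 : ∀ x : A, op x (d x) = one)
    (hb1 : ∀ x : A, d (op (d x) zero) = op (d x) zero)
    (hb2 : d zero = zero)
    (hc : ∀ x y : A, d (op (op (op x zero) (op y zero)) x)
        = op (op (op (d x) zero) (op (d y) zero)) (d x)) :
    ∀ x : A, x ≠ zero →
      ∀ z : A, z ≠ zero →
        (∃ u : A,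
          (u ≠ zero ∧
            ∀ v : A, v ≠ zero ∧ op v (d x) = one → op u (op v zero) = one) ∧
          op z (d u) = one) →
        op z (d (op (d x) zero)) = one := by
  -- 1·a = a
  have h1a : ∀ a : A, op one a = a := by
    intro a; have h := Q1 a a; rwa [hone] at h
  -- (a·b)·1 = 1
  have hm1 : ∀ a b : A, op (op a b) one = one := by
    intro a b
    have h := Q2 b a a
    rw [hone (op b a), hone a] at h
    exact h.symm
  -- a·1 = 1
  have hmul1 : ∀ a : A, op a one = one := by
    intro a
    have h := Q1 a a
    rw [hone a, h1a a] at h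
    -- h : a = a ... not useful; instead:
    have h2 := hm1 (op a a) a
    rw [Q1 a a] at h2
    exact h2
  -- absorption a·(a·b) = a·b
  have absorb : ∀ a b : A, op a (op a b) = op a b := by
    intro a b
    have h2 := Q1 (op a b) a
    rw [Q1 a b] at h2
    exact h2
  -- transitivity
  have htrans : ∀ a b c : A, op a b = one → op b c = one → op a c = one := by
    intro a b c hab hbc
    have h := Q2 a b c
    rw [hab, hbc, h1a, hmul1] at h
    exact h
  -- antisymmetry
  have hanti : ∀ a b : A, op a b = one → op b a = one → a = b := by
    intro a b hab hba
    have h := Q3 a b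
    rw [hab, hba, hone one, h1a, h1a] at h
    exact h
  -- N : a' ≤ a·c
  have hN : ∀ a c : A, op (op a zero) (op a c) = one := by
    intro a c
    have h := Q2 a zero c
    rw [hzero a, hzero c, hone one] at h
    exact h
  -- starstar : a ≤ (a·b)·b
  have hss : ∀ a b : A, op a (op (op a b) b) = one := by
    intro a b
    have h := Q2 (op a b) a b
    rw [Q1 a b, absorb a b, hone] at h
    exact h
  -- double negation
  have hdn : ∀ a : A, op (op a zero) zero = a := by
    intro a
    have hge : op (op (op a zero) zero) a = one := by
      have h := hN (op a zero) a
      rwa [Q1 a zero] at h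
    have hle : op a (op (op a zero) zero) = one := hss a zero
    exact hanti _ _ hge hle
  -- orthomodular-style lemma : p ≤ s → p ≤ s·p
  have hom : ∀ p s : A, op p s = one → op p (op s p) = one := by
    intro p s hps
    have h := Q2 s p (op s p)
    rw [absorb s p, hone (op s p), hps, h1a] at h
    exact h.symm
  -- a ≤ a'·z
  have hle13 : ∀ a z : A, op a (op (op a zero) z) = one := by
    intro a z
    have h := hN (op a zero) z
    rwa [hdn a] at h
  -- contraposition
  have hcontra : ∀ a b : A, op a b = one → op (op b zero) (op a zero) = one := by
    intro a b hab
    have step1 : op (op b a) (op b zero) = op a zero := by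
      have h := Q2 b a zero
      rwa [hab, h1a] at h
    have h := hom (op b zero) (op b a) (hN b a)
    rwa [step1] at h
  -- E1 : a ≤ b → ((a·0)·(b·0))·a = b
  have hE1 : ∀ a b : A, op a b = one →
      op (op (op a zero) (op b zero)) a = b := by
    intro a b hab
    set a' := op a zero with ha'
    set b' := op b zero with hb'
    set s := op a' b' with hs
    have hba' : op b' a' = one := hcontra a b hab
    have hF9 : op s b' = a' := by
      have h := Q3 a' b'
      rw [hba', hmul1, h1a, h1a] at h
      exact h.symm
    have hF11 : op b' s = one := hom b' a' hba'
    have hF13 : ∀ z : A, op a' (op s z) = op b' z := by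
      intro z
      have h := Q2 s b' z
      rwa [hF9, hF11, h1a] at h
    have hF14 : ∀ z : A, op a' (op s z) = op s (op a' z) := by
      intro z
      have h := Q2 s a' z
      rwa [Q1 a' b', absorb a' b'] at h
    have key : op s (op a' zero) = op b' zero := by
      rw [← hF14, hF13]
    rwa [ha', hb', hdn a, hdn b] at key
  -- E2 : p ≤ ((p·0)·(q·0))·p
  have hE2 : ∀ p q : A, op p (op (op (op p zero) (op q zero)) p) = one := by
    intro p q
    exact hom p _ (hle13 p (op q zero))
  -- monotonicity of d
  have hmono : ∀ a b : A, op a b = one → op (d a) (d b) = one := by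
    intro a b hab
    have h := hc a b
    rw [hE1 a b hab] at h
    have h2 := hE2 (d a) (d b)
    rwa [← h] at h2
  -- main proof
  intro x hx z _hz ⟨u, ⟨_hu0, hperp⟩, hzu⟩
  have hdx : d x ≠ zero := by
    intro h
    apply hx
    apply hanti
    · have h2 := ha2 x; rwa [h] at h2
    · exact hzero x
  have hu : op u (op (d x) zero) = one := hperp (d x) ⟨hdx, hone (d x)⟩
  have hmono' : op (d u) (d (op (d x) zero)) = one := hmono u (op (d x) zero) hu
  exact htrans z (d u) _ hzu hmono'
end
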